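/- arXiv:2508.17349 — 2 statements merged into one kernel-verified Lean document; each statement's English description precedes it below -/
import Mathlib

section
/- Let G be a bipartite graph without isolated vertices containing distinct vertices v, w and three distinct vertices u_1, u_2, u_3 with N(u_i) = {v, w} for each i. Then G admits a 2-layer fan-planar drawing if and only if G − u_3 does. -/
variable {V : Type*}

/-- A bipartite graph with layers `X` and `Y`; each edge is a pair `(x, y)` with
`x ∈ X` and `y ∈ Y`. -/
structure BipGraph (V : Type*) where
  X : Set V
  Y : Set V
  disj : Disjoint X Y
  E : Set (V × V)
  mem_fst : ∀ e ∈ E, e.1 ∈ X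
  mem_snd : ∀ e ∈ E, e.2 ∈ Y

def BipGraph.Adj (G : BipGraph V) (a b : V) : Prop := (a, b) ∈ G.E ∨ (b, a) ∈ G.E

/-- Open neighborhood. -/
def BipGraph.nbhd (G : BipGraph V) (v : V) : Set V := {u | G.Adj v u}

noncomputable def BipGraph.deg (G : BipGraph V) (v : V) : ℕ := (G.nbhd v).ncard

/-- Two edges cross in the 2-layer drawing given by positions `px`, `py`. -/
def Cross (px py : V → ℝ) (e f : V × V) : Prop :=
  (px e.1 < px f.1 ∧ py f.2 < py e.2) ∨ (px f.1 < px e.1 ∧ py e.2 < py f.2)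

/-- `(px, py)` encodes a 2-layer drawing of `G`: positions are injective on each layer. -/
def IsDrawing (G : BipGraph V) (px py : V → ℝ) : Prop :=
  Set.InjOn px G.X ∧ Set.InjOn py G.Y

/-- A drawing is fan-planar if for each edge, all edges crossing it share a common endpoint. -/
def FanPlanar (G : BipGraph V) (px py : V → ℝ) : Prop :=
  ∀ e ∈ G.E, ∃ c : V, ∀ f ∈ G.E, Cross px py e f → f.1 = c ∨ f.2 = c

def AdmitsFanPlanar (G : BipGraph V) : Prop :=
  ∃ px py : V → ℝ, IsDrawing G px py ∧ FanPlanar G px py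

/-- Three edges that pairwise share no endpoint (form a matching). -/
def PairwiseDisjoint3 (e f f' : V × V) : Prop :=
  e.1 ≠ f.1 ∧ e.1 ≠ f'.1 ∧ f.1 ≠ f'.1 ∧ e.2 ≠ f.2 ∧ e.2 ≠ f'.2 ∧ f.2 ≠ f'.2

/-- A violating triple: `f` and `f'` both cross `e` and the three edges form a matching. -/
def ViolatingTriple (G : BipGraph V) (px py : V → ℝ) (e f f' : V × V) : Prop :=
  e ∈ G.E ∧ f ∈ G.E ∧ f' ∈ G.E ∧ Cross px py e f ∧ Cross px py e f' ∧
    PairwiseDisjoint3 e f f'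

/-- Induced subgraph with a vertex deleted. -/
def BipGraph.deleteVert (G : BipGraph V) (w : V) : BipGraph V where
  X := G.X \ {w}
  Y := G.Y \ {w}
  disj := G.disj.mono Set.diff_subset Set.diff_subset
  E := {e ∈ G.E | e.1 ≠ w ∧ e.2 ≠ w}
  mem_fst := fun e he => ⟨G.mem_fst e he.1, he.2.1⟩
  mem_snd := fun e he => ⟨G.mem_snd e he.1, he.2.2⟩

def NoIsolated (G : BipGraph V) : Prop := ∀ v ∈ G.X ∪ G.Y, (G.nbhd v).Nonempty

-- auxiliary lemmas
lemma cross_symm {px py : V → ℝ} {e f : V × V} :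
    Cross px py e f ↔ Cross px py f e := by
  unfold Cross; tauto

lemma afp_delete (G : BipGraph V) (z : V) :
    AdmitsFanPlanar G → AdmitsFanPlanar (G.deleteVert z) := by
  rintro ⟨px, py, ⟨h1, h2⟩, hfp⟩
  refine ⟨px, py, ⟨h1.mono Set.diff_subset, h2.mono Set.diff_subset⟩, fun e he => ?_⟩
  obtain ⟨c, hc⟩ := hfp e he.1
  exact ⟨c, fun f hf hcr => hc f hf.1 hcr⟩

def BipGraph.flip (G : BipGraph V) : BipGraph V where
  X := G.Y
  Y := G.X
  disj := G.disj.symm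
  E := {e | e.swap ∈ G.E}
  mem_fst := fun e he => G.mem_snd e.swap he
  mem_snd := fun e he => G.mem_fst e.swap he

lemma BipGraph.ext' {G H : BipGraph V} (hX : G.X = H.X) (hY : G.Y = H.Y)
    (hE : G.E = H.E) : G = H := by
  cases G; cases H; cases hX; cases hY; cases hE; rfl

lemma delete_flip (G : BipGraph V) (z : V) :
    (G.deleteVert z).flip = G.flip.deleteVert z := by
  refine BipGraph.ext' rfl rfl ?_
  ext e
  show (e.swap ∈ G.E ∧ e.swap.1 ≠ z ∧ e.swap.2 ≠ z) ↔
    (e.swap ∈ G.E ∧ e.1 ≠ z ∧ e.2 ≠ z)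
  exact ⟨fun ⟨a, b, c⟩ => ⟨a, c, b⟩, fun ⟨a, b, c⟩ => ⟨a, c, b⟩⟩

lemma flip_nbhd (G : BipGraph V) (x : V) : G.flip.nbhd x = G.nbhd x := by
  ext y
  show ((y, x) ∈ G.E ∨ (x, y) ∈ G.E) ↔ ((x, y) ∈ G.E ∨ (y, x) ∈ G.E)
  exact or_comm

lemma afp_flip (G : BipGraph V) : AdmitsFanPlanar G → AdmitsFanPlanar G.flip := by
  rintro ⟨px, py, ⟨h1, h2⟩, hfp⟩
  refine ⟨py, px, ⟨h2, h1⟩, fun e he => ?_⟩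
  obtain ⟨c, hc⟩ := hfp e.swap he
  refine ⟨c, fun f hf hcr => ?_⟩
  have : Cross px py e.swap f.swap := by
    unfold Cross at hcr ⊢
    simp only [Prod.fst_swap, Prod.snd_swap]
    tauto
  exact (hc f.swap hf this).symm.imp id id |>.symm.imp id id |> fun h => h.symm

lemma afp_unflip (G : BipGraph V) : AdmitsFanPlanar G.flip → AdmitsFanPlanar G := by
  rintro ⟨px, py, ⟨h1, h2⟩, hfp⟩
  refine ⟨py, px, ⟨h2, h1⟩, fun e he => ?_⟩
  have he' : e.swap ∈ G.flip.E := by show e.swap.swap ∈ G.E; simpa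
  obtain ⟨c, hc⟩ := hfp e.swap he'
  refine ⟨c, fun f hf hcr => ?_⟩
  have hf' : f.swap ∈ G.flip.E := by show f.swap.swap ∈ G.E; simpa
  have : Cross px py e.swap f.swap := by
    unfold Cross at hcr ⊢
    simp only [Prod.fst_swap, Prod.snd_swap]
    tauto
  have := hc f.swap hf' this
  simpa [or_comm] using this

lemma key2 (G : BipGraph V) (v w u₁ u₂ u₃ : V)
    (hvw : v ≠ w) (h13 : u₁ ≠ u₃) (h23 : u₂ ≠ u₃)
    (h3v : v ≠ u₃) (h3w : w ≠ u₃) (h3Y : u₃ ∉ G.Y)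
    (e1v : (u₁, v) ∈ G.E) (e1w : (u₁, w) ∈ G.E)
    (e2v : (u₂, v) ∈ G.E) (e2w : (u₂, w) ∈ G.E)
    (hN1 : G.nbhd u₁ ⊆ {v, w}) (hN2 : G.nbhd u₂ ⊆ {v, w}) (hN3 : G.nbhd u₃ ⊆ {v, w})
    (px py : V → ℝ)
    (hd : IsDrawing (G.deleteVert u₃) px py)
    (hfp : FanPlanar (G.deleteVert u₃) px py)
    (hu12 : px u₁ < px u₂) (hvw' : py v < py w) :
    AdmitsFanPlanar G := by
  classical
  set G' := G.deleteVert u₃ with hG'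
  -- layer facts
  have hvY : v ∈ G.Y := G.mem_snd _ e1v
  have hwY : w ∈ G.Y := G.mem_snd _ e1w
  have hX1 : u₁ ∈ G.X := G.mem_fst _ e1v
  have hX2 : u₂ ∈ G.X := G.mem_fst _ e2v
  have hne : ∀ {a b : V}, a ∈ G.X → b ∈ G.Y → a ≠ b :=
    fun ha hb => G.disj.ne_of_mem ha hb
  -- memberships in G'
  have me1v : (u₁, v) ∈ G'.E := ⟨e1v, h13, h3v⟩
  have me1w : (u₁, w) ∈ G'.E := ⟨e1w, h13, h3w⟩
  have me2v : (u₂, v) ∈ G'.E := ⟨e2v, h23, h3v⟩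
  have me2w : (u₂, w) ∈ G'.E := ⟨e2w, h23, h3w⟩
  have hmx : ∀ f ∈ G'.E, f.1 ∈ G'.X := fun f hf => G'.mem_fst f hf
  have hx1' : u₁ ∈ G'.X := ⟨hX1, by simpa using h13⟩
  have hx2' : u₂ ∈ G'.X := ⟨hX2, by simpa using h23⟩
  -- neighborhood helpers
  have hnb1 : ∀ f : V × V, f ∈ G.E → f.1 = u₁ → f.2 = v ∨ f.2 = w := by
    intro f hf h1
    have hfe : (u₁, f.2) ∈ G.E := by rw [← h1, Prod.mk.eta]; exact hf
    have : f.2 ∈ G.nbhd u₁ := Or.inl hfe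
    simpa using hN1 this
  have hnb2 : ∀ f : V × V, f ∈ G.E → f.1 = u₂ → f.2 = v ∨ f.2 = w := by
    intro f hf h1
    have hfe : (u₂, f.2) ∈ G.E := by rw [← h1, Prod.mk.eta]; exact hf
    have : f.2 ∈ G.nbhd u₂ := Or.inl hfe
    simpa using hN2 this
  -- basic crossing
  have hcross_vw : Cross px py (u₂, v) (u₁, w) := Or.inr ⟨hu12, hvw'⟩
  obtain ⟨c₂, hc₂⟩ := hfp (u₂, v) me2v
  have hc₂1 : u₁ = c₂ ∨ w = c₂ := hc₂ (u₁, w) me1w hcross_vw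
  obtain ⟨c₁, hc₁⟩ := hfp (u₁, w) me1w
  have hc₁2 : u₂ = c₁ ∨ v = c₁ := hc₁ (u₂, v) me2v (cross_symm.mp hcross_vw)
  -- Key Lemma K : crossers of (u₂,w) end at v
  have LemK : ∀ f ∈ G'.E, Cross px py (u₂, w) f → f.2 = v := by
    intro f hf hcr
    have hfE : f ∈ G.E := hf.1
    have hfX : f.1 ∈ G.X := G.mem_fst f hfE
    have hfY : f.2 ∈ G.Y := G.mem_snd f hfE
    rcases hcr with ⟨h1, h2⟩ | ⟨h1, h2⟩
    · -- right side : px u₂ < px f.1, py f.2 < py w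
      by_contra hne2
      have hcf : Cross px py (u₁, w) f := Or.inl ⟨hu12.trans h1, h2⟩
      rcases hc₁ f hf hcf with hh | hh <;> rcases hc₁2 with hg | hg
      · rw [← hg] at hh; rw [hh] at h1; exact lt_irrefl _ h1
      · rw [← hg] at hh; exact hne hfX hvY hh
      · rw [← hg] at hh; exact hne hX2 hfY hh.symm
      · rw [← hg] at hh; exact hne2 hh
    · -- left side : px f.1 < px u₂, py w < py f.2
      exfalso
      rcases lt_trichotomy (px f.1) (px u₁) with h | h | h
      · have hcf : Cross px py (u₁, w) f := Or.inr ⟨h, h2⟩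
        rcases hc₁ f hf hcf with hh | hh <;> rcases hc₁2 with hg | hg
        · rw [← hg] at hh; rw [hh] at h; exact lt_asymm h hu12
        · rw [← hg] at hh; exact hne hfX hvY hh
        · rw [← hg] at hh; exact hne hX2 hfY hh.symm
        · rw [← hg] at hh; rw [hh] at h2; exact lt_asymm h2 hvw'
      · have hf1 : f.1 = u₁ := hd.1 (hmx f hf) hx1' h
        rcases hnb1 f hfE hf1 with hh | hh
        · rw [hh] at h2; exact lt_asymm h2 hvw'
        · rw [hh] at h2; exact lt_irrefl _ h2
      · have hcf : Cross px py (u₂, v) f := Or.inr ⟨h1, hvw'.trans h2⟩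
        rcases hc₂ f hf hcf with hh | hh <;> rcases hc₂1 with hg | hg
        · rw [← hg] at hh; rw [hh] at h; exact lt_irrefl _ h
        · rw [← hg] at hh; exact hne hfX hwY hh
        · rw [← hg] at hh; exact hne hX1 hfY hh.symm
        · rw [← hg] at hh; rw [hh] at h2; exact lt_irrefl _ h2
  -- Key Lemma K2 : crossers of (u₂,v) end at w
  have LemK2 : ∀ f ∈ G'.E, Cross px py (u₂, v) f → f.2 = w := by
    intro f hf hcr
    have hfE : f ∈ G.E := hf.1
    have hfX : f.1 ∈ G.X := G.mem_fst f hfE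
    have hfY : f.2 ∈ G.Y := G.mem_snd f hfE
    rcases hc₂ f hf hcr with hh | hh <;> rcases hc₂1 with hg | hg
    · -- f.1 = u₁
      rw [← hg] at hh
      rcases hnb1 f hfE hh with h | h
      · exfalso
        rcases hcr with ⟨_, h2⟩ | ⟨_, h2⟩ <;> rw [h] at h2 <;> exact lt_irrefl _ h2
      · exact h
    · rw [← hg] at hh; exact absurd hh (hne hfX hwY)
    · rw [← hg] at hh; exact absurd hh.symm (hne hX1 hfY)
    · rw [← hg] at hh; exact hh
  -- the new drawing
  set g : ℝ → ℝ := fun t => if t ≤ px u₂ then t else t + 1 with hgdef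
  have hg : StrictMono g := by
    intro s t hst
    simp only [hgdef]
    split_ifs <;> linarith
  set PX : V → ℝ := Function.update (fun x => g (px x)) u₃ (px u₂ + 1/2) with hPXdef
  have hPX : ∀ x, x ≠ u₃ → PX x = g (px x) := by
    intro x hx
    rw [hPXdef]
    exact Function.update_of_ne hx _ _
  have hPX3 : PX u₃ = px u₂ + 1/2 := by
    rw [hPXdef]; exact Function.update_self _ _ _
  have hgp1 : ∀ t, g t < px u₂ + 1/2 ↔ t ≤ px u₂ := by
    intro t; simp only [hgdef]; split_ifs with h
    · constructor <;> intro h2 <;> linarith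
    · constructor <;> intro h2 <;> linarith
  have hgp2 : ∀ t, px u₂ + 1/2 < g t ↔ px u₂ < t := by
    intro t; simp only [hgdef]; split_ifs with h
    · constructor <;> intro h2 <;> linarith
    · constructor <;> intro h2 <;> linarith
  -- edge classification
  have hGE : ∀ e ∈ G.E, e ∈ G'.E ∨ e = (u₃, v) ∨ e = (u₃, w) := by
    intro e he
    by_cases h1 : e.1 = u₃
    · have hfe : (u₃, e.2) ∈ G.E := by rw [← h1, Prod.mk.eta]; exact he
      have hm : e.2 ∈ G.nbhd u₃ := Or.inl hfe
      rcases (by simpa using hN3 hm : e.2 = v ∨ e.2 = w) with h | h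
      · exact Or.inr (Or.inl (Prod.ext h1 h))
      · exact Or.inr (Or.inr (Prod.ext h1 h))
    · by_cases h2 : e.2 = u₃
      · exfalso
        have hfe : (e.1, u₃) ∈ G.E := by rw [← h2, Prod.mk.eta]; exact he
        have hm : e.1 ∈ G.nbhd u₃ := Or.inr hfe
        rcases (by simpa using hN3 hm : e.1 = v ∨ e.1 = w) with h | h
        · exact hne (G.mem_fst e he) hvY h
        · exact hne (G.mem_fst e he) hwY h
      · exact Or.inl ⟨he, h1, h2⟩
  -- crossing transfer
  have hA1 : ∀ e f : V × V, e.1 ≠ u₃ → f.1 ≠ u₃ → Cross PX py e f → Cross px py e f := by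
    intro e f heu hfu hcr
    rcases hcr with ⟨h1, h2⟩ | ⟨h1, h2⟩
    · rw [hPX _ heu, hPX _ hfu] at h1
      exact Or.inl ⟨hg.lt_iff_lt.mp h1, h2⟩
    · rw [hPX _ heu, hPX _ hfu] at h1
      exact Or.inr ⟨hg.lt_iff_lt.mp h1, h2⟩
  have hA2 : ∀ f ∈ G'.E, Cross PX py (u₃, v) f →
      Cross px py (u₂, v) f ∨ f = (u₂, w) := by
    intro f hf hcr
    have hf1 : f.1 ≠ u₃ := hf.2.1
    have hcr' : (PX u₃ < PX f.1 ∧ py f.2 < py v) ∨ (PX f.1 < PX u₃ ∧ py v < py f.2) := hcr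
    rcases hcr' with ⟨h1, h2⟩ | ⟨h1, h2⟩
    · rw [hPX3, hPX _ hf1] at h1
      exact Or.inl (Or.inl ⟨(hgp2 _).mp h1, h2⟩)
    · rw [hPX3, hPX _ hf1] at h1
      have hle : px f.1 ≤ px u₂ := (hgp1 _).mp h1
      rcases lt_or_eq_of_le hle with h | h
      · exact Or.inl (Or.inr ⟨h, h2⟩)
      · have hf1u : f.1 = u₂ := hd.1 (hmx f hf) hx2' h
        rcases hnb2 f hf.1 hf1u with hh | hh
        · exfalso; rw [hh] at h2; exact lt_irrefl _ h2
        · exact Or.inr (Prod.ext hf1u hh)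
  have hA3 : ∀ f ∈ G'.E, Cross PX py (u₃, w) f → Cross px py (u₂, w) f := by
    intro f hf hcr
    have hf1 : f.1 ≠ u₃ := hf.2.1
    have hcr' : (PX u₃ < PX f.1 ∧ py f.2 < py w) ∨ (PX f.1 < PX u₃ ∧ py w < py f.2) := hcr
    rcases hcr' with ⟨h1, h2⟩ | ⟨h1, h2⟩
    · rw [hPX3, hPX _ hf1] at h1
      exact Or.inl ⟨(hgp2 _).mp h1, h2⟩
    · rw [hPX3, hPX _ hf1] at h1
      have hle : px f.1 ≤ px u₂ := (hgp1 _).mp h1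
      rcases lt_or_eq_of_le hle with h | h
      · exact Or.inr ⟨h, h2⟩
      · exfalso
        have hf1u : f.1 = u₂ := hd.1 (hmx f hf) hx2' h
        rcases hnb2 f hf.1 hf1u with hh | hh
        · rw [hh] at h2; exact lt_asymm h2 hvw'
        · rw [hh] at h2; exact lt_irrefl _ h2
  refine ⟨PX, py, ⟨?_, ?_⟩, ?_⟩
  · -- InjOn PX G.X
    intro x hx y hy hxy
    by_cases hx3 : x = u₃ <;> by_cases hy3 : y = u₃
    · rw [hx3, hy3]
    · exfalso
      rw [hx3, hPX3, hPX _ hy3] at hxy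
      rcases le_or_gt (px y) (px u₂) with h | h
      · have := (hgp1 (px y)).mpr h; linarith
      · have := (hgp2 (px y)).mpr h; linarith
    · exfalso
      rw [hy3, hPX3, hPX _ hx3] at hxy
      rcases le_or_gt (px x) (px u₂) with h | h
      · have := (hgp1 (px x)).mpr h; linarith
      · have := (hgp2 (px x)).mpr h; linarith
    · rw [hPX _ hx3, hPX _ hy3] at hxy
      exact hd.1 ⟨hx, by simpa using hx3⟩ ⟨hy, by simpa using hy3⟩ (hg.injective hxy)
  · -- InjOn py G.Y
    intro x hx y hy hxy
    refine hd.2 ⟨hx, ?_⟩ ⟨hy, ?_⟩ hxy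
    · exact fun h => h3Y ((Set.mem_singleton_iff.mp h) ▸ hx)
    · exact fun h => h3Y ((Set.mem_singleton_iff.mp h) ▸ hy)
  · -- FanPlanar
    intro e he
    rcases hGE e he with heG | rfl | rfl
    · have he1 : e.1 ≠ u₃ := heG.2.1
      by_cases hew : e = (u₂, w)
      · subst hew
        refine ⟨v, fun f hf hcr => ?_⟩
        rcases hGE f hf with hfG | rfl | rfl
        · exact Or.inr (LemK f hfG (hA1 _ f he1 hfG.2.1 hcr))
        · exact Or.inr rfl
        · exfalso
          have h' := hA3 _ heG (cross_symm.mp hcr)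
          rcases h' with ⟨h, _⟩ | ⟨h, _⟩ <;> exact lt_irrefl _ h
      · by_cases hA : Cross px py (u₂, v) e
        · have he2w : e.2 = w := LemK2 e heG hA
          obtain ⟨ce, hce⟩ := hfp e heG
          have hcev : u₂ = ce ∨ v = ce := hce (u₂, v) me2v (cross_symm.mp hA)
          refine ⟨v, fun f hf hcr => ?_⟩
          rcases hGE f hf with hfG | rfl | rfl
          · have old : Cross px py e f := hA1 e f he1 hfG.2.1 hcr
            rcases hcev with hg' | hg'
            · rcases hce f hfG old with hh | hh
              · have hf1 : f.1 = u₂ := hh.trans hg'.symm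
                rcases hnb2 f hfG.1 hf1 with h | h
                · exact Or.inr h
                · exfalso
                  rcases old with ⟨_, h2⟩ | ⟨_, h2⟩ <;> rw [he2w, h] at h2 <;>
                    exact lt_irrefl _ h2
              · exfalso
                have hfu : f.2 = u₂ := hh.trans hg'.symm
                exact hne hX2 (G.mem_snd f hfG.1) hfu.symm
            · rcases hce f hfG old with hh | hh
              · exact Or.inl (hh.trans hg'.symm)
              · exact Or.inr (hh.trans hg'.symm)
          · exact Or.inr rfl
          · exfalso
            have hc3 : Cross px py (u₂, w) e := hA3 e heG (cross_symm.mp hcr)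
            have hev := LemK e heG hc3
            rw [he2w] at hev; exact hvw hev.symm
        · by_cases hB : Cross px py (u₂, w) e
          · have he2v : e.2 = v := LemK e heG hB
            obtain ⟨ce, hce⟩ := hfp e heG
            have hcew : u₂ = ce ∨ w = ce := hce (u₂, w) me2w (cross_symm.mp hB)
            refine ⟨w, fun f hf hcr => ?_⟩
            rcases hGE f hf with hfG | rfl | rfl
            · have old : Cross px py e f := hA1 e f he1 hfG.2.1 hcr
              rcases hcew with hg' | hg'
              · rcases hce f hfG old with hh | hh
                · have hf1 : f.1 = u₂ := hh.trans hg'.symm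
                  rcases hnb2 f hfG.1 hf1 with h | h
                  · exfalso
                    rcases old with ⟨_, h2⟩ | ⟨_, h2⟩ <;> rw [he2v, h] at h2 <;>
                      exact lt_irrefl _ h2
                  · exact Or.inr h
                · exfalso
                  have hfu : f.2 = u₂ := hh.trans hg'.symm
                  exact hne hX2 (G.mem_snd f hfG.1) hfu.symm
              · rcases hce f hfG old with hh | hh
                · exact Or.inl (hh.trans hg'.symm)
                · exact Or.inr (hh.trans hg'.symm)
            · exfalso
              rcases hA2 e heG (cross_symm.mp hcr) with h | h
              · exact hA h
              · exact hew h
            · exact Or.inr rfl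
          · obtain ⟨ce, hce⟩ := hfp e heG
            refine ⟨ce, fun f hf hcr => ?_⟩
            rcases hGE f hf with hfG | rfl | rfl
            · exact hce f hfG (hA1 e f he1 hfG.2.1 hcr)
            · exfalso
              rcases hA2 e heG (cross_symm.mp hcr) with h | h
              · exact hA h
              · exact hew h
            · exact absurd (hA3 e heG (cross_symm.mp hcr)) hB
    · -- e = (u₃, v)
      refine ⟨w, fun f hf hcr => ?_⟩
      rcases hGE f hf with hfG | rfl | rfl
      · rcases hA2 f hfG hcr with h | h
        · exact Or.inr (LemK2 f hfG h)
        · exact Or.inr (by rw [h])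
      · exfalso
        have h' : (PX u₃ < PX u₃ ∧ py v < py v) ∨ (PX u₃ < PX u₃ ∧ py v < py v) := hcr
        rcases h' with ⟨h, _⟩ | ⟨h, _⟩ <;> exact lt_irrefl _ h
      · exfalso
        have h' : (PX u₃ < PX u₃ ∧ py w < py v) ∨ (PX u₃ < PX u₃ ∧ py v < py w) := hcr
        rcases h' with ⟨h, _⟩ | ⟨h, _⟩ <;> exact lt_irrefl _ h
    · -- e = (u₃, w)
      refine ⟨v, fun f hf hcr => ?_⟩
      rcases hGE f hf with hfG | rfl | rfl
      · exact Or.inr (LemK f hfG (hA3 f hfG hcr))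
      · exact Or.inr rfl
      · exfalso
        have h' : (PX u₃ < PX u₃ ∧ py w < py w) ∨ (PX u₃ < PX u₃ ∧ py w < py w) := hcr
        rcases h' with ⟨h, _⟩ | ⟨h, _⟩ <;> exact lt_irrefl _ h

lemma key (G : BipGraph V) (v w u₁ u₂ u₃ : V)
    (hvw : v ≠ w) (h12 : u₁ ≠ u₂) (h13 : u₁ ≠ u₃) (h23 : u₂ ≠ u₃)
    (h3v : v ≠ u₃) (h3w : w ≠ u₃) (h3Y : u₃ ∉ G.Y)
    (e1v : (u₁, v) ∈ G.E) (e1w : (u₁, w) ∈ G.E)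
    (e2v : (u₂, v) ∈ G.E) (e2w : (u₂, w) ∈ G.E)
    (hN1 : G.nbhd u₁ ⊆ {v, w}) (hN2 : G.nbhd u₂ ⊆ {v, w}) (hN3 : G.nbhd u₃ ⊆ {v, w}) :
    AdmitsFanPlanar (G.deleteVert u₃) → AdmitsFanPlanar G := by
  rintro ⟨px, py, hd, hfp⟩
  have hN1' : G.nbhd u₁ ⊆ {w, v} := by rw [Set.pair_comm]; exact hN1
  have hN2' : G.nbhd u₂ ⊆ {w, v} := by rw [Set.pair_comm]; exact hN2
  have hN3' : G.nbhd u₃ ⊆ {w, v} := by rw [Set.pair_comm]; exact hN3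
  have hx1 : u₁ ∈ (G.deleteVert u₃).X := ⟨G.mem_fst _ e1v, by simpa using h13⟩
  have hx2 : u₂ ∈ (G.deleteVert u₃).X := ⟨G.mem_fst _ e2v, by simpa using h23⟩
  have hyv : v ∈ (G.deleteVert u₃).Y := ⟨G.mem_snd _ e1v, by simpa using h3v⟩
  have hyw : w ∈ (G.deleteVert u₃).Y := ⟨G.mem_snd _ e1w, by simpa using h3w⟩
  have hpx : px u₁ ≠ px u₂ := fun h => h12 (hd.1 hx1 hx2 h)
  have hpy : py v ≠ py w := fun h => hvw (hd.2 hyv hyw h)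
  rcases hpx.lt_or_gt with h | h <;> rcases hpy.lt_or_gt with h' | h'
  · exact key2 G v w u₁ u₂ u₃ hvw h13 h23 h3v h3w h3Y e1v e1w e2v e2w
      hN1 hN2 hN3 px py hd hfp h h'
  · exact key2 G w v u₁ u₂ u₃ hvw.symm h13 h23 h3w h3v h3Y e1w e1v e2w e2v
      hN1' hN2' hN3' px py hd hfp h h'
  · exact key2 G v w u₂ u₁ u₃ hvw h23 h13 h3v h3w h3Y e2v e2w e1v e1w
      hN2 hN1 hN3 px py hd hfp h h'
  · exact key2 G w v u₂ u₁ u₃ hvw.symm h23 h13 h3w h3v h3Y e2w e2v e1w e1v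
      hN2' hN1' hN3' px py hd hfp h h'


/-- If `u₁, u₂, u₃` all have neighborhood `{v, w}`, then `G` is 2-layer fan-planar
iff `G - u₃` is. -/
theorem stmt4 (G : BipGraph V) (hiso : NoIsolated G) (v w : V) (hvw : v ≠ w)
    (u : Fin 3 → V) (hu : Function.Injective u)
    (hN : ∀ i, G.nbhd (u i) = {v, w}) :
    AdmitsFanPlanar G ↔ AdmitsFanPlanar (G.deleteVert (u 2)) := by
  constructor
  · exact afp_delete G (u 2)
  · intro hG'
    have h01 : u 0 ≠ u 1 := fun h => by simpa using hu h
    have h02 : u 0 ≠ u 2 := fun h => by simpa using hu h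
    have h12 : u 1 ≠ u 2 := fun h => by simpa using hu h
    have hadj : ∀ i, G.Adj (u i) v ∧ G.Adj (u i) w := by
      intro i
      constructor
      · have : v ∈ G.nbhd (u i) := by rw [hN i]; exact Set.mem_insert _ _
        exact this
      · have : w ∈ G.nbhd (u i) := by
          rw [hN i]; exact Set.mem_insert_iff.mpr (Or.inr rfl)
        exact this
    have hne : ∀ {a b : V}, a ∈ G.X → b ∈ G.Y → a ≠ b :=
      fun ha hb => G.disj.ne_of_mem ha hb
    rcases (hadj 2).1 with h3v' | h3v'
    · -- u 2 ∈ X side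
      have hX3 : u 2 ∈ G.X := G.mem_fst _ h3v'
      have hvY : v ∈ G.Y := G.mem_snd _ h3v'
      have hedge : ∀ i z, z ∈ G.Y → G.Adj (u i) z → (u i, z) ∈ G.E := by
        intro i z hz h
        rcases h with h | h
        · exact h
        · exact absurd rfl (hne (G.mem_fst _ h) hz)
      have h3w' : (u 2, w) ∈ G.E := by
        rcases (hadj 2).2 with h | h
        · exact h
        · exact absurd rfl (hne hX3 (G.mem_snd _ h))
      have hwY : w ∈ G.Y := G.mem_snd _ h3w'
      exact key G v w (u 0) (u 1) (u 2) hvw h01 h02 h12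
        (hne hX3 hvY).symm (hne hX3 hwY).symm (fun h => hne hX3 h rfl)
        (hedge 0 v hvY (hadj 0).1) (hedge 0 w hwY (hadj 0).2)
        (hedge 1 v hvY (hadj 1).1) (hedge 1 w hwY (hadj 1).2)
        (hN 0).le (hN 1).le (hN 2).le hG'
    · -- u 2 ∈ Y side : use flip
      have hY3 : u 2 ∈ G.Y := G.mem_snd _ h3v'
      have hvX : v ∈ G.X := G.mem_fst _ h3v'
      have hedge : ∀ i z, z ∈ G.X → G.Adj (u i) z → (z, u i) ∈ G.E := by
        intro i z hz h
        rcases h with h | h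
        · exact absurd rfl (hne hz (G.mem_snd _ h))
        · exact h
      have h3w' : (w, u 2) ∈ G.E := by
        rcases (hadj 2).2 with h | h
        · exact absurd rfl (hne (G.mem_fst _ h) hY3)
        · exact h
      have hwX : w ∈ G.X := G.mem_fst _ h3w'
      have hG'f : AdmitsFanPlanar (G.flip.deleteVert (u 2)) := by
        rw [← delete_flip]; exact afp_flip _ hG'
      have hNf : ∀ i, G.flip.nbhd (u i) ⊆ {v, w} := by
        intro i; rw [flip_nbhd]; exact (hN i).le
      refine afp_unflip G (key G.flip v w (u 0) (u 1) (u 2) hvw h01 h02 h12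
        (hne hvX hY3) (hne hwX hY3) (fun h => hne h hY3 rfl)
        ?_ ?_ ?_ ?_ (hNf 0) (hNf 1) (hNf 2) hG'f)
      · exact hedge 0 v hvX (hadj 0).1
      · exact hedge 0 w hwX (hadj 0).2
      · exact hedge 1 v hvX (hadj 1).1
      · exact hedge 1 w hwX (hadj 1).2
end

section
/- In any 2-layer fan-planar drawing of a bipartite graph G, every vertex v has at most four neighbors of degree at least 3 in G. -/
variable {V : Type*}

/-!
Put `v` in the layer `X` and let `u₁ < ⋯ < u₅` be five of its neighbours of degree at least 3.
Fan-planarity in a bipartite drawing means that two edges crossing a common edge share an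
endpoint. If `u₃` has a neighbour `c` to the right of `v`, look at the two neighbours of `u₄`
other than `v`: one to the left of `v` crosses `(c, u₃)` together with `(v, u₅)`; if both are
to the right, one of them differs from `c` and crosses `(v, u₅)` together with `(c, u₃)`.
A neighbour of `u₃` to the left of `v` is the mirror image, with `u₂` and `u₁`.
-/

theorem Set.Finite.exists_fin_strictMono_comp {α β : Type*} [LinearOrder β] {s : Set α}
    {f : α → β} (hs : s.Finite) (hf : s.InjOn f) {n : ℕ} (hn : n ≤ s.ncard) :
    ∃ u : Fin n → α, (∀ i, u i ∈ s) ∧ StrictMono (f ∘ u) := by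
  obtain ⟨t, hts, htn⟩ := Finset.exists_subset_card_eq (s := (hs.image f).toFinset) (n := n)
    (by rwa [← Set.ncard_eq_toFinset_card _ (hs.image f), hf.ncard_image])
  have hpre : ∀ i, ∃ a ∈ s, f a = t.orderEmbOfFin htn i := fun i => by
    simpa using hts (t.orderEmbOfFin_mem htn i)
  choose u hu hfu using hpre
  refine ⟨u, hu, fun i j hij => ?_⟩
  simpa only [Function.comp, hfu] using (t.orderEmbOfFin htn).strictMono hij

theorem Set.exists_pair_ne_ne_of_three_le_ncard {α : Type*} {s : Set α} (hs : 3 ≤ s.ncard)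
    (v : α) : ∃ a b, a ∈ s ∧ b ∈ s ∧ a ≠ b ∧ a ≠ v ∧ b ≠ v := by
  have hfin : (s \ {v}).Finite := (Set.finite_of_ncard_pos (by omega)).sdiff
  have h1 : 1 < (s \ {v}).ncard := by
    have := s.pred_ncard_le_ncard_sdiff_singleton v
    omega
  obtain ⟨a, b, ⟨ha, hav⟩, ⟨hb, hbv⟩, hab⟩ := (Set.one_lt_ncard_iff hfin).mp h1
  exact ⟨a, b, ha, hb, hab, hav, hbv⟩

namespace BipGraph

theorem Adj.mem_E_of_notMem_Y {G : BipGraph V} {a b : V} (h : G.Adj a b) (ha : a ∉ G.Y) :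
    (a, b) ∈ G.E :=
  h.resolve_right fun hba => ha (G.mem_snd _ hba)

theorem Adj.mem_E_of_notMem_X {G : BipGraph V} {a b : V} (h : G.Adj a b) (ha : a ∉ G.X) :
    (b, a) ∈ G.E :=
  h.resolve_left fun hab => ha (G.mem_fst _ hab)

variable (G : BipGraph V)

def swap : BipGraph V where
  X := G.Y
  Y := G.X
  disj := G.disj.symm
  E := Prod.swap ⁻¹' G.E
  mem_fst := fun _ he => G.mem_snd _ he
  mem_snd := fun _ he => G.mem_fst _ he

@[simp]
theorem swap_nbhd (w : V) : G.swap.nbhd w = G.nbhd w := by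
  ext z
  simp only [nbhd, Adj, swap, Set.mem_preimage, Prod.swap_prod_mk, or_comm]

@[simp]
theorem swap_deg (w : V) : G.swap.deg w = G.deg w := by
  simp only [deg, swap_nbhd]

end BipGraph

section Drawing

variable {G : BipGraph V} {px py : V → ℝ}

theorem Cross.swap {e f : V × V} (h : Cross py px e f) : Cross px py e.swap f.swap := by
  obtain ⟨h1, h2⟩ | ⟨h1, h2⟩ := h
  exacts [Or.inr ⟨h2, h1⟩, Or.inl ⟨h2, h1⟩]

theorem cross_neg_iff {e f : V × V} : Cross (-px) (-py) e f ↔ Cross px py e f := by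
  simp only [Cross, Pi.neg_apply, neg_lt_neg_iff]
  exact or_comm

theorem IsDrawing.swap (hD : IsDrawing G px py) : IsDrawing G.swap py px := ⟨hD.2, hD.1⟩

namespace FanPlanar

theorem swap (hfan : FanPlanar G px py) : FanPlanar G.swap py px := fun e he => by
  obtain ⟨c, hc⟩ := hfan e.swap he
  exact ⟨c, fun f hf hcr => (hc f.swap hf hcr.swap).symm⟩

theorem neg (hfan : FanPlanar G px py) : FanPlanar G (-px) (-py) := fun e he => by
  obtain ⟨c, hc⟩ := hfan e he
  exact ⟨c, fun f hf hcr => hc f hf (cross_neg_iff.mp hcr)⟩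

/-- Bipartiteness puts the common endpoint given by fan-planarity on the same layer for both
crossing edges. -/
theorem eq_or_eq_of_cross (hfan : FanPlanar G px py) {e f f' : V × V} (he : e ∈ G.E)
    (hf : f ∈ G.E) (hf' : f' ∈ G.E) (h : Cross px py e f) (h' : Cross px py e f') :
    f.1 = f'.1 ∨ f.2 = f'.2 := by
  obtain ⟨c, hc⟩ := hfan e he
  have hXY : ∀ {g g' : V × V}, g ∈ G.E → g' ∈ G.E → g.1 = c → g'.2 = c → False :=
    fun hg hg' h1 h2 => Set.disjoint_left.mp G.disj (h1 ▸ G.mem_fst _ hg) (h2 ▸ G.mem_snd _ hg')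
  rcases hc f hf h with h1 | h1 <;> rcases hc f' hf' h' with h2 | h2
  · exact Or.inl (h1.trans h2.symm)
  · exact (hXY hf hf' h1 h2).elim
  · exact (hXY hf' hf h2 h1).elim
  · exact Or.inr (h1.trans h2.symm)

theorem false_of_right_left (hfan : FanPlanar G px py) {v a b u u' u'' : V}
    (ha : (a, u) ∈ G.E) (hb : (b, u') ∈ G.E) (hv : (v, u'') ∈ G.E)
    (hva : px v < px a) (hbv : px b < px v) (huu' : py u < py u') (hu'u'' : py u' < py u'') :
    False := by
  rcases hfan.eq_or_eq_of_cross (e := (a, u)) (f := (v, u'')) (f' := (b, u')) ha hv hb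
    (Or.inr ⟨hva, huu'.trans hu'u''⟩) (Or.inr ⟨hbv.trans hva, huu'⟩) with h | h
  · exact hbv.ne (congrArg px h).symm
  · exact hu'u''.ne (congrArg py h).symm

theorem eq_or_eq_of_right_right (hfan : FanPlanar G px py) {v a b u u' u'' : V}
    (ha : (a, u) ∈ G.E) (hb : (b, u') ∈ G.E) (hv : (v, u'') ∈ G.E)
    (hva : px v < px a) (hvb : px v < px b) (hu : py u < py u'') (hu' : py u' < py u'') :
    a = b ∨ u = u' :=
  hfan.eq_or_eq_of_cross (e := (v, u'')) hv ha hb (Or.inl ⟨hva, hu⟩) (Or.inl ⟨hvb, hu'⟩)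

theorem false_of_right_neighbour (hfan : FanPlanar G px py) {v c a b u u' u'' : V}
    (hc : (c, u) ∈ G.E) (ha : (a, u') ∈ G.E) (hb : (b, u') ∈ G.E) (hv : (v, u'') ∈ G.E)
    (hvc : px v < px c) (hab : a ≠ b) (hav : px a ≠ px v) (hbv : px b ≠ px v)
    (huu' : py u < py u') (hu'u'' : py u' < py u'') : False := by
  by_cases hleft : px a < px v ∨ px b < px v
  · obtain ⟨d, hd, hdv⟩ : ∃ d, (d, u') ∈ G.E ∧ px d < px v := by
      rcases hleft with h | h
      exacts [⟨a, ha, h⟩, ⟨b, hb, h⟩]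
    exact hfan.false_of_right_left hc hd hv hvc hdv huu' hu'u''
  · push Not at hleft
    have huu : u ≠ u' := fun h => huu'.ne (congrArg py h)
    have hca := hfan.eq_or_eq_of_right_right hc ha hv hvc (hleft.1.lt_of_ne' hav)
      (huu'.trans hu'u'') hu'u''
    have hcb := hfan.eq_or_eq_of_right_right hc hb hv hvc (hleft.2.lt_of_ne' hbv)
      (huu'.trans hu'u'') hu'u''
    exact hab ((hca.resolve_right huu).symm.trans (hcb.resolve_right huu))

end FanPlanar

theorem exists_pair_edges_px_ne_of_three_le_deg (hpx : Set.InjOn px G.X) {u v : V}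
    (hu : u ∈ G.Y) (hv : v ∈ G.X) (hdeg : 3 ≤ G.deg u) :
    ∃ a b, (a, u) ∈ G.E ∧ (b, u) ∈ G.E ∧ a ≠ b ∧ px a ≠ px v ∧ px b ≠ px v := by
  obtain ⟨a, b, ha, hb, hab, hav, hbv⟩ := Set.exists_pair_ne_ne_of_three_le_ncard hdeg v
  have huX : u ∉ G.X := Set.disjoint_right.mp G.disj hu
  have ha' := BipGraph.Adj.mem_E_of_notMem_X ha huX
  have hb' := BipGraph.Adj.mem_E_of_notMem_X hb huX
  exact ⟨a, b, ha', hb', hab, fun h => hav (hpx (G.mem_fst _ ha') hv h),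
    fun h => hbv (hpx (G.mem_fst _ hb') hv h)⟩

end Drawing

theorem ncard_nbhd_three_le_deg_le_four_of_notMem_Y {G : BipGraph V} {px py : V → ℝ}
    (hD : IsDrawing G px py) (hfan : FanPlanar G px py) {v : V} (hv : v ∉ G.Y) :
    {u ∈ G.nbhd v | 3 ≤ G.deg u}.ncard ≤ 4 := by
  set T := {u ∈ G.nbhd v | 3 ≤ G.deg u}
  by_contra! hT
  have hvE : ∀ u ∈ T, (v, u) ∈ G.E := fun u hu => hu.1.mem_E_of_notMem_Y hv
  have hTY : T ⊆ G.Y := fun u hu => G.mem_snd _ (hvE u hu)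
  obtain ⟨u, huT, hmono⟩ :=
    (Set.finite_of_ncard_pos (by omega)).exists_fin_strictMono_comp (hD.2.mono hTY) hT
  have hlt : ∀ {i j : Fin 5}, i < j → py (u i) < py (u j) := fun h => hmono h
  have hvX : v ∈ G.X := G.mem_fst _ (hvE _ (huT 0))
  have hoff : ∀ i, ∃ a b,
      (a, u i) ∈ G.E ∧ (b, u i) ∈ G.E ∧ a ≠ b ∧ px a ≠ px v ∧ px b ≠ px v := fun i =>
    exists_pair_edges_px_ne_of_three_le_deg hD.1 (hTY (huT i)) hvX (huT i).2
  obtain ⟨c, -, hc, -, -, hcv, -⟩ := hoff 2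
  rcases hcv.lt_or_gt with hcv | hvc
  · -- reflect both layers, so that `c` lies to the right of `v`
    obtain ⟨a, b, ha, hb, hab, hav, hbv⟩ := hoff 1
    exact hfan.neg.false_of_right_neighbour hc ha hb (hvE _ (huT 0)) (neg_lt_neg hcv) hab
      (neg_injective.ne hav) (neg_injective.ne hbv) (neg_lt_neg (hlt (by decide)))
      (neg_lt_neg (hlt (by decide)))
  · obtain ⟨a, b, ha, hb, hab, hav, hbv⟩ := hoff 3
    exact hfan.false_of_right_neighbour hc ha hb (hvE _ (huT 4)) hvc hab hav hbv
      (hlt (by decide)) (hlt (by decide))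

/-- In any 2-layer fan-planar drawing, every vertex has at most four neighbors
of degree at least 3. -/
theorem stmt14 (G : BipGraph V) (px py : V → ℝ) (hD : IsDrawing G px py)
    (hfan : FanPlanar G px py) (v : V) :
    {u ∈ G.nbhd v | 3 ≤ G.deg u}.ncard ≤ 4 := by
  by_cases hv : v ∈ G.Y
  · simpa only [BipGraph.swap_nbhd, BipGraph.swap_deg] using
      ncard_nbhd_three_le_deg_le_four_of_notMem_Y hD.swap hfan.swap
        (Set.disjoint_right.mp G.disj hv)
  · exact ncard_nbhd_three_le_deg_le_four_of_notMem_Y hD hfan hv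
end
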